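/- For every N ≥ 2 and every KC-PMI P on N parties: (i) the set of subsystems X (with |X| ≥ 2) whose β-set is positive or partial is upward closed under inclusion, and for every such X whose β-set is not completely essential there exists Z ⊊ X with |Z| ≥ 2 and β(Z) completely essential; (ii) the subsystems with completely essential β-sets form an antichain under inclusion, and for any such Y, every Z ⊊ Y with |Z| ≥ 2 has β(Z) vanishing; (iii) the set of subsystems with vanishing β-sets is downward closed under inclusion and is the complement (within the subsystems of size ≥ 2) of the set in (i). -/

import Mathlib

namespace HEC

/-- The parties `⟦N⟧ = {0,1,…,N}`, where `0` is the purifier. -/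
abbrev Party (N : ℕ) := Fin (N + 1)

/-- A collection of parties. -/
abbrev PSet (N : ℕ) := Finset (Party N)

/-- MI instances: unordered pairs of subsets of parties. -/
abbrev MI (N : ℕ) := Sym2 (PSet N)

/-- `m` is an MI instance, i.e. an unordered pair of disjoint nonempty subsets of `⟦N⟧`. -/
def IsMIInst {N : ℕ} (m : MI N) : Prop :=
  ∃ Y Z : PSet N, m = s(Y, Z) ∧ Y.Nonempty ∧ Z.Nonempty ∧ Disjoint Y Z

/-- The MI-poset order: `{Y,Z} ⪯ {Y',Z'}` iff (`Y ⊆ Y'` and `Z ⊆ Z'`) or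
(`Y ⊆ Z'` and `Z ⊆ Y'`).  (The two cases are absorbed by the existential over
representatives of the unordered pairs.) -/
def MIle {N : ℕ} (m m' : MI N) : Prop :=
  ∃ Y Z Y' Z' : PSet N, m = s(Y, Z) ∧ m' = s(Y', Z') ∧ Y ⊆ Y' ∧ Z ⊆ Z'

/-- An `N`-party entropy vector, extended to all subsets of `⟦N⟧` by the purification
convention: `S ∅ = 0` and `S Y = S (⟦N⟧ \ Y)` whenever `0 ∈ Y`. -/
structure EntropyVec (N : ℕ) where
  S : PSet N → ℝ
  S_empty : S ∅ = 0
  S_purify : ∀ Y : PSet N, (0 : Party N) ∈ Y → S Y = S (Finset.univ \ Y)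

/-- Mutual information `I(Y:Z) = S_Y + S_Z - S_{Y∪Z}`. -/
def EntropyVec.I {N : ℕ} (v : EntropyVec N) (Y Z : PSet N) : ℝ :=
  v.S Y + v.S Z - v.S (Y ∪ Z)

/-- Membership in the subadditivity cone: `I(Y:Z) ≥ 0` for every MI instance. -/
def EntropyVec.InSAC {N : ℕ} (v : EntropyVec N) : Prop :=
  ∀ Y Z : PSet N, Y.Nonempty → Z.Nonempty → Disjoint Y Z → 0 ≤ v.I Y Z

/-- The pattern of marginal independence of `v`: the MI instances vanishing on `v`. -/
def EntropyVec.PMI {N : ℕ} (v : EntropyVec N) : Set (MI N) :=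
  {m | ∃ Y Z : PSet N, m = s(Y, Z) ∧ Y.Nonempty ∧ Z.Nonempty ∧ Disjoint Y Z ∧ v.I Y Z = 0}

/-- `P` is a down-set in the MI-poset. -/
def IsMIDownSet {N : ℕ} (P : Set (MI N)) : Prop :=
  ∀ m m' : MI N, IsMIInst m → m' ∈ P → MIle m m' → m ∈ P

/-- `P` is a KC-PMI: the PMI of some entropy vector in the subadditivity cone,
which moreover is a down-set in the MI-poset. -/
def IsKCPMI {N : ℕ} (P : Set (MI N)) : Prop :=
  (∃ v : EntropyVec N, v.InSAC ∧ P = v.PMI) ∧ IsMIDownSet P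

/-- The β-set of `X`: all MI instances `{Y,Z}` with `Y ∪ Z = X`. -/
def betaSet {N : ℕ} (X : PSet N) : Set (MI N) :=
  {m | ∃ Y Z : PSet N, m = s(Y, Z) ∧ Y.Nonempty ∧ Z.Nonempty ∧ Disjoint Y Z ∧ Y ∪ Z = X}

/-- The antichain `A` of minimal elements of `P̄ = M_N ∖ P`. -/
def minimalMI {N : ℕ} (P : Set (MI N)) : Set (MI N) :=
  {m | IsMIInst m ∧ m ∉ P ∧ ∀ m' : MI N, IsMIInst m' → m' ∉ P → MIle m' m → m' = m}

/-- `β(X)` is positive: `β(X) ⊆ P̄`. -/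
def BPos {N : ℕ} (P : Set (MI N)) (X : PSet N) : Prop :=
  ∀ m ∈ betaSet X, m ∉ P

/-- `β(X)` is vanishing: `β(X) ⊆ P`. -/
def BVan {N : ℕ} (P : Set (MI N)) (X : PSet N) : Prop :=
  betaSet X ⊆ P

/-- `β(X)` is partial: it has elements both in `P` and in `P̄`. -/
def BPart {N : ℕ} (P : Set (MI N)) (X : PSet N) : Prop :=
  (∃ m ∈ betaSet X, m ∈ P) ∧ (∃ m ∈ betaSet X, m ∉ P)

/-- `β(X)` is essential: `β(X) ∩ A ≠ ∅`. -/
def BEss {N : ℕ} (P : Set (MI N)) (X : PSet N) : Prop :=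
  ∃ m ∈ betaSet X, m ∈ minimalMI P

/-- `β(X)` is completely essential: `β(X) ⊆ A`. -/
def BCEss {N : ℕ} (P : Set (MI N)) (X : PSet N) : Prop :=
  betaSet X ⊆ minimalMI P

/-- `β(X)` is non-essential: `β(X) ∩ A = ∅`. -/
def BNEss {N : ℕ} (P : Set (MI N)) (X : PSet N) : Prop :=
  ∀ m ∈ betaSet X, m ∉ minimalMI P

/-- `pos_<(Y)`: the proper subsystems `Z ⊊ Y` with `|Z| ≥ 2` and `β(Z)` positive. -/
def posBelow {N : ℕ} (P : Set (MI N)) (Y : PSet N) : Set (PSet N) :=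
  {Z | Z ⊂ Y ∧ 2 ≤ Z.card ∧ BPos P Z}

/-- `Max(pos_<(Y))`: the inclusion-maximal elements of `pos_<(Y)`. -/
def maxPosBelow {N : ℕ} (P : Set (MI N)) (Y : PSet N) : Set (PSet N) :=
  {Z | Z ∈ posBelow P Y ∧ ∀ Z' ∈ posBelow P Y, Z ⊆ Z' → Z = Z'}

/-- The MI instance `m = {Y,Z}` splits `X` if `X ∩ Y ≠ ∅` and `X ∩ Z ≠ ∅`. -/
def Splits {N : ℕ} (m : MI N) (X : PSet N) : Prop :=
  ∃ Y Z : PSet N, m = s(Y, Z) ∧ (X ∩ Y).Nonempty ∧ (X ∩ Z).Nonempty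

/-- The hyperedges of the correlation hypergraph `H_P`: one hyperedge `e_X` for each
`X ⊆ ⟦N⟧` (with `|X| ≥ 2`) whose β-set is positive.  Vertices `v_ℓ` are identified
with the parties `ℓ ∈ ⟦N⟧`, and hyperedges with the corresponding subsystems. -/
def Hedge {N : ℕ} (P : Set (MI N)) : Set (PSet N) :=
  {X | 2 ≤ X.card ∧ BPos P X}

/-- The hyperedges of the sub-hypergraph `H_Y`: the hyperedges `e_Z` with `Z ⊊ Y`. -/
def subEdges {N : ℕ} (P : Set (MI N)) (Y : PSet N) : Set (PSet N) :=
  {Z | Z ⊂ Y ∧ Z ∈ Hedge P}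

/-- One step in a hypergraph with hyperedge set `E`: `a` and `b` lie in a common
hyperedge. -/
def hStep {N : ℕ} (E : Set (PSet N)) (a b : Party N) : Prop :=
  ∃ e ∈ E, a ∈ e ∧ b ∈ e

/-- Connectivity of the hypergraph with vertex set `V` and hyperedge set `E`:
every two vertices are joined by a path (a one-vertex hypergraph is connected). -/
def hConn {N : ℕ} (V : PSet N) (E : Set (PSet N)) : Prop :=
  ∀ a ∈ V, ∀ b ∈ V, Relation.ReflTransGen (hStep E) a b

/-- The vertex set of the connected component of `a` in the hypergraph with
vertex set `V` and hyperedge set `E`. -/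
def hComp {N : ℕ} (V : PSet N) (E : Set (PSet N)) (a : Party N) : Set (Party N) :=
  {b | b ∈ V ∧ Relation.ReflTransGen (hStep E) a b}

/-- A clique of the line graph `L_{H_P}`: a set of hyperedges of `H_P` which are
pairwise adjacent (distinct hyperedges being adjacent iff they intersect). -/
def IsLineClique {N : ℕ} (P : Set (MI N)) (Q : Set (PSet N)) : Prop :=
  Q ⊆ Hedge P ∧ ∀ e ∈ Q, ∀ f ∈ Q, e ≠ f → (e ∩ f).Nonempty

/-- A max-clique of the line graph `L_{H_P}`: a (nonempty) clique which is maximal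
under inclusion. -/
def IsMaxClique {N : ℕ} (P : Set (MI N)) (Q : Set (PSet N)) : Prop :=
  Q.Nonempty ∧ IsLineClique P Q ∧ ∀ Q' : Set (PSet N), IsLineClique P Q' → Q ⊆ Q' → Q = Q'

/-- `Q^∩`: the intersection of the hyperedges in `Q`, viewed as sets of vertices. -/
def qInter {N : ℕ} (Q : Set (PSet N)) : Set (Party N) :=
  {ℓ | ∀ e ∈ Q, ℓ ∈ e}

/-!
Since `{Y,W} ⪯ {Y ∪ (X ∖ Z), W}` for every `{Y,W} ∈ β(Z)` and `Z ⊆ X`, and `P` is a down-set,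
vanishing β-sets are inherited by subsystems; this gives (iii) and the first half of (i).

Now let `Z` be minimal among the subsystems with non-vanishing β-set. Every MI instance inside a
proper subsystem of `Z` vanishes, so the entropy is additive there, `S_W = ∑_{i ∈ W} S_i`. Hence
all instances of `β(Z)` have the same mutual information `∑_{i ∈ Z} S_i - S_Z`, which is nonzero,
so `β(Z)` is positive; and each of its instances is minimal in `P̄`, because an instance strictly
below it lives in the β-set of a proper subsystem of `Z`. Finally, every instance of `β(Z')`, for
`Z' ⊊ Y`, lies strictly below an instance of a completely essential `β(Y)`, so `β(Z')` vanishes;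
this gives (ii).
-/

lemma eq_and_eq_of_union_eq {α : Type*} [DecidableEq α] {Y Z Y' Z' : Finset α} (hY : Y ⊆ Y')
    (hZ : Z ⊆ Z') (hd : Disjoint Y' Z') (hu : Y ∪ Z = Y' ∪ Z') : Y = Y' ∧ Z = Z' := by
  simp only [Finset.ext_iff, Finset.subset_iff, Finset.disjoint_left, Finset.mem_union] at *
  grind

variable {N : ℕ}

lemma two_le_card_union {Y Z : PSet N} (hY : Y.Nonempty) (hZ : Z.Nonempty) (hd : Disjoint Y Z) :
    2 ≤ (Y ∪ Z).card := by
  rw [Finset.card_union_of_disjoint hd]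
  have := hY.card_pos
  have := hZ.card_pos
  omega

lemma EntropyVec.I_comm (v : EntropyVec N) (Y Z : PSet N) : v.I Y Z = v.I Z Y := by
  simp only [EntropyVec.I, Finset.union_comm]
  ring

lemma EntropyVec.mk_mem_PMI_iff (v : EntropyVec N) {Y Z : PSet N} :
    s(Y, Z) ∈ v.PMI ↔ Y.Nonempty ∧ Z.Nonempty ∧ Disjoint Y Z ∧ v.I Y Z = 0 := by
  constructor
  · rintro ⟨Y', Z', he, hY, hZ, hd, hI⟩
    rcases Sym2.eq_iff.mp he with ⟨rfl, rfl⟩ | ⟨rfl, rfl⟩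
    · exact ⟨hY, hZ, hd, hI⟩
    · exact ⟨hZ, hY, hd.symm, by rwa [v.I_comm]⟩
  · rintro ⟨hY, hZ, hd, hI⟩
    exact ⟨Y, Z, rfl, hY, hZ, hd, hI⟩

lemma mk_mem_betaSet_iff {X Y Z : PSet N} :
    s(Y, Z) ∈ betaSet X ↔ Y.Nonempty ∧ Z.Nonempty ∧ Disjoint Y Z ∧ Y ∪ Z = X := by
  constructor
  · rintro ⟨Y', Z', he, hY, hZ, hd, hu⟩
    rcases Sym2.eq_iff.mp he with ⟨rfl, rfl⟩ | ⟨rfl, rfl⟩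
    · exact ⟨hY, hZ, hd, hu⟩
    · exact ⟨hZ, hY, hd.symm, by rwa [Finset.union_comm]⟩
  · rintro ⟨hY, hZ, hd, hu⟩
    exact ⟨Y, Z, rfl, hY, hZ, hd, hu⟩

lemma isMIInst_of_mem_betaSet {X : PSet N} {m : MI N} (hm : m ∈ betaSet X) : IsMIInst m := by
  obtain ⟨Y, Z, rfl, hY, hZ, hd, -⟩ := hm
  exact ⟨Y, Z, rfl, hY, hZ, hd⟩

lemma exists_mem_betaSet_of_isMIInst {m : MI N} (hm : IsMIInst m) :
    ∃ X : PSet N, 2 ≤ X.card ∧ m ∈ betaSet X := by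
  obtain ⟨Y, Z, rfl, hY, hZ, hd⟩ := hm
  exact ⟨Y ∪ Z, two_le_card_union hY hZ hd, Y, Z, rfl, hY, hZ, hd, rfl⟩

lemma betaSet_nonempty {X : PSet N} (h2 : 2 ≤ X.card) : (betaSet X).Nonempty := by
  obtain ⟨a, ha⟩ : X.Nonempty := Finset.card_pos.mp (by omega)
  refine ⟨s({a}, X.erase a), mk_mem_betaSet_iff.mpr ⟨Finset.singleton_nonempty a, ?_, ?_, ?_⟩⟩
  · rw [← Finset.card_pos, Finset.card_erase_of_mem ha]
    omega
  · simp
  · rw [← Finset.insert_eq, Finset.insert_erase ha]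

lemma eq_of_mem_betaSet_of_mem_betaSet {X X' : PSet N} {m : MI N} (hm : m ∈ betaSet X)
    (hm' : m ∈ betaSet X') : X = X' := by
  obtain ⟨Y, Z, rfl, -, -, -, rfl⟩ := hm
  exact (mk_mem_betaSet_iff.mp hm').2.2.2

lemma exists_MIle_mem_betaSet_of_subset {Z X : PSet N} {m : MI N} (hm : m ∈ betaSet Z)
    (hZX : Z ⊆ X) : ∃ m' ∈ betaSet X, MIle m m' := by
  obtain ⟨Y, W, rfl, hY, hW, hd, rfl⟩ := hm
  refine ⟨s(Y ∪ (X \ (Y ∪ W)), W), mk_mem_betaSet_iff.mpr ⟨hY.mono Finset.subset_union_left, hW,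
    ?_, ?_⟩, Y, W, _, W, rfl, rfl, Finset.subset_union_left, subset_rfl⟩
  · exact Finset.disjoint_union_left.mpr ⟨hd, Finset.sdiff_disjoint.mono_right
      Finset.subset_union_right⟩
  · rw [Finset.union_right_comm, Finset.union_sdiff_of_subset hZX]

lemma subset_of_MIle_of_mem_betaSet {W X : PSet N} {m m' : MI N} (h : MIle m m')
    (hm : m ∈ betaSet W) (hm' : m' ∈ betaSet X) : W ⊆ X := by
  obtain ⟨Y, Z, Y', Z', rfl, rfl, hYY', hZZ'⟩ := h
  rw [← (mk_mem_betaSet_iff.mp hm).2.2.2, ← (mk_mem_betaSet_iff.mp hm').2.2.2]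
  exact Finset.union_subset_union hYY' hZZ'

lemma eq_of_MIle_of_mem_betaSet {X : PSet N} {m m' : MI N} (h : MIle m m')
    (hm : m ∈ betaSet X) (hm' : m' ∈ betaSet X) : m = m' := by
  obtain ⟨Y, Z, Y', Z', rfl, rfl, hYY', hZZ'⟩ := h
  obtain ⟨-, -, -, hu⟩ := mk_mem_betaSet_iff.mp hm
  obtain ⟨-, -, hd', hu'⟩ := mk_mem_betaSet_iff.mp hm'
  obtain ⟨rfl, rfl⟩ := eq_and_eq_of_union_eq hYY' hZZ' hd' (hu.trans hu'.symm)
  rfl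

section Pattern

variable {P : Set (MI N)}

lemma BVan.mono (hP : IsMIDownSet P) {Z X : PSet N} (hZX : Z ⊆ X) (hX : BVan P X) :
    BVan P Z := by
  intro m hm
  obtain ⟨m', hm', hle⟩ := exists_MIle_mem_betaSet_of_subset hm hZX
  exact hP m m' (isMIInst_of_mem_betaSet hm) (hX hm') hle

lemma bVan_iff_not_bPos_or_bPart {X : PSet N} (h2 : 2 ≤ X.card) :
    BVan P X ↔ ¬ (BPos P X ∨ BPart P X) := by
  obtain ⟨m₀, hm₀⟩ := betaSet_nonempty h2
  constructor
  · rintro hX (hpos | ⟨-, m, hm, hmP⟩)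
    · exact hpos m₀ hm₀ (hX hm₀)
    · exact hmP (hX hm)
  · intro h m hm
    by_contra hmP
    by_cases hsome : ∃ m' ∈ betaSet X, m' ∈ P
    · exact h (Or.inr ⟨hsome, m, hm, hmP⟩)
    · exact h (Or.inl fun m' hm' hm'P => hsome ⟨m', hm', hm'P⟩)

lemma BCEss.not_bVan {Y : PSet N} (h2 : 2 ≤ Y.card) (hY : BCEss P Y) : ¬ BVan P Y := by
  obtain ⟨m, hm⟩ := betaSet_nonempty h2
  exact fun hvan => (hY hm).2.1 (hvan hm)

lemma BCEss.bVan_of_ssubset {Y Z : PSet N} (hY : BCEss P Y) (hZY : Z ⊂ Y) : BVan P Z := by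
  intro m hm
  by_contra hmP
  obtain ⟨m', hm', hle⟩ := exists_MIle_mem_betaSet_of_subset hm hZY.subset
  have hmm' : m = m' := (hY hm').2.2 m (isMIInst_of_mem_betaSet hm) hmP hle
  exact hZY.ne (eq_of_mem_betaSet_of_mem_betaSet hm (hmm' ▸ hm'))

lemma bCEss_of_bPos_of_forall_ssubset_bVan {X : PSet N} (hX : BPos P X)
    (hsub : ∀ W ⊂ X, 2 ≤ W.card → BVan P W) : BCEss P X := by
  intro m hm
  refine ⟨isMIInst_of_mem_betaSet hm, hX m hm, fun m' hm' hm'P hle => ?_⟩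
  obtain ⟨W, hW2, hm'W⟩ := exists_mem_betaSet_of_isMIInst hm'
  obtain rfl | hWX := (subset_of_MIle_of_mem_betaSet hle hm'W hm).eq_or_ssubset
  · exact eq_of_MIle_of_mem_betaSet hle hm'W hm
  · exact absurd (hsub W hWX hW2 hm'W) hm'P

end Pattern

lemma EntropyVec.S_eq_sum_singleton (v : EntropyVec N) {A : PSet N}
    (hA : ∀ Y Z : PSet N, Y.Nonempty → Z.Nonempty → Disjoint Y Z → Y ∪ Z ⊆ A → v.I Y Z = 0) :
    v.S A = ∑ i ∈ A, v.S {i} := by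
  induction A using Finset.induction_on with
  | empty => simp [v.S_empty]
  | insert a B haB ih =>
    rw [Finset.sum_insert haB, ← ih fun Y Z hY hZ hd hYZ =>
      hA Y Z hY hZ hd (hYZ.trans (Finset.subset_insert a B))]
    rcases B.eq_empty_or_nonempty with rfl | hB
    · simp [v.S_empty]
    have hI := hA {a} B (Finset.singleton_nonempty a) hB (Finset.disjoint_singleton_left.mpr haB)
      (Finset.insert_eq a B).ge
    rw [EntropyVec.I, ← Finset.insert_eq] at hI
    linarith

lemma EntropyVec.I_eq_sum_singleton_sub (v : EntropyVec N) {X Y Z : PSet N}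
    (hX : ∀ Y Z : PSet N, Y.Nonempty → Z.Nonempty → Disjoint Y Z → Y ∪ Z ⊂ X → v.I Y Z = 0)
    (hY : Y.Nonempty) (hZ : Z.Nonempty) (hd : Disjoint Y Z) (hu : Y ∪ Z = X) :
    v.I Y Z = ∑ i ∈ X, v.S {i} - v.S X := by
  subst hu
  have additive_below {A : PSet N} (hA : A ⊂ Y ∪ Z) : v.S A = ∑ i ∈ A, v.S {i} :=
    v.S_eq_sum_singleton fun Y' Z' hY' hZ' hd' hsub => hX Y' Z' hY' hZ' hd' (hsub.trans_ssubset hA)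
  have hYssub : Y ⊂ Y ∪ Z :=
    (hd.symm.right_lt_sup_of_left_ne_bot hZ.ne_empty).trans_eq (Finset.union_comm Z Y)
  have hZssub : Z ⊂ Y ∪ Z := hd.right_lt_sup_of_left_ne_bot hY.ne_empty
  rw [EntropyVec.I, additive_below hYssub, additive_below hZssub, ← Finset.sum_union hd]

lemma bPos_of_forall_ssubset_bVan (v : EntropyVec N) {X : PSet N}
    (hsub : ∀ W ⊂ X, 2 ≤ W.card → BVan v.PMI W) (hX : ¬ BVan v.PMI X) : BPos v.PMI X := by
  have hI : ∀ Y Z : PSet N, Y.Nonempty → Z.Nonempty → Disjoint Y Z → Y ∪ Z = X →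
      v.I Y Z = ∑ i ∈ X, v.S {i} - v.S X :=
    fun _ _ => v.I_eq_sum_singleton_sub fun Y Z hY hZ hd hYZ => (v.mk_mem_PMI_iff.mp
      (hsub _ hYZ (two_le_card_union hY hZ hd) (mk_mem_betaSet_iff.mpr ⟨hY, hZ, hd, rfl⟩))).2.2.2
  obtain ⟨m₀, hm₀, hm₀P⟩ := Set.not_subset.mp hX
  obtain ⟨Y₀, Z₀, rfl, hY₀, hZ₀, hd₀, hu₀⟩ := hm₀
  have hne : ∑ i ∈ X, v.S {i} - v.S X ≠ 0 := fun h =>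
    hm₀P (v.mk_mem_PMI_iff.mpr ⟨hY₀, hZ₀, hd₀, (hI Y₀ Z₀ hY₀ hZ₀ hd₀ hu₀).trans h⟩)
  rintro m ⟨Y, Z, rfl, hY, hZ, hd, hu⟩ hmP
  exact hne ((hI Y Z hY hZ hd hu).symm.trans (v.mk_mem_PMI_iff.mp hmP).2.2.2)

lemma exists_subset_bCEss (v : EntropyVec N) {X : PSet N} (h2 : 2 ≤ X.card)
    (hX : ¬ BVan v.PMI X) : ∃ Z ⊆ X, 2 ≤ Z.card ∧ BCEss v.PMI Z := by
  induction X using Finset.strongInduction with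
  | H X ih =>
    by_cases hsub : ∀ W ⊂ X, 2 ≤ W.card → BVan v.PMI W
    · exact ⟨X, subset_rfl, h2, bCEss_of_bPos_of_forall_ssubset_bVan
        (bPos_of_forall_ssubset_bVan v hsub hX) hsub⟩
    · push Not at hsub
      obtain ⟨W, hWX, hW2, hW⟩ := hsub
      obtain ⟨Z, hZW, hZ2, hZ⟩ := ih W hWX hW2 hW
      exact ⟨Z, hZW.trans hWX.subset, hZ2, hZ⟩

theorem statement6_general {N : ℕ} (P : Set (MI N)) (hP : IsKCPMI P) :
    -- (i)
    ((∀ X X' : PSet N, 2 ≤ X.card → X ⊆ X' →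
        (BPos P X ∨ BPart P X) → (BPos P X' ∨ BPart P X')) ∧
     (∀ X : PSet N, 2 ≤ X.card → (BPos P X ∨ BPart P X) → ¬ BCEss P X →
        ∃ Z : PSet N, Z ⊂ X ∧ 2 ≤ Z.card ∧ BCEss P Z)) ∧
    -- (ii)
    ((∀ Y Y' : PSet N, 2 ≤ Y.card → 2 ≤ Y'.card →
        BCEss P Y → BCEss P Y' → Y ⊆ Y' → Y = Y') ∧
     (∀ Y : PSet N, 2 ≤ Y.card → BCEss P Y →
        ∀ Z : PSet N, Z ⊂ Y → 2 ≤ Z.card → BVan P Z)) ∧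
    -- (iii)
    ((∀ X Z : PSet N, 2 ≤ Z.card → Z ⊆ X → BVan P X → BVan P Z) ∧
     (∀ X : PSet N, 2 ≤ X.card → (BVan P X ↔ ¬ (BPos P X ∨ BPart P X)))) := by
  obtain ⟨⟨v, -, rfl⟩, hdown⟩ := hP
  refine ⟨⟨?_, ?_⟩, ⟨?_, ?_⟩, ⟨?_, ?_⟩⟩
  · intro X X' h2 hXX' hX
    have h2' : 2 ≤ X'.card := h2.trans (Finset.card_le_card hXX')
    by_contra hX'
    exact (bVan_iff_not_bPos_or_bPart h2).mp
      (((bVan_iff_not_bPos_or_bPart h2').mpr hX').mono hdown hXX') hX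
  · intro X h2 hX hnot
    obtain ⟨Z, hZX, hZ2, hZ⟩ :=
      exists_subset_bCEss v h2 fun hvan => (bVan_iff_not_bPos_or_bPart h2).mp hvan hX
    exact ⟨Z, hZX.ssubset_of_ne fun h => hnot (h ▸ hZ), hZ2, hZ⟩
  · intro Y Y' h2 _ hY hY' hYY'
    by_contra hne
    exact hY.not_bVan h2 (hY'.bVan_of_ssubset (hYY'.ssubset_of_ne hne))
  · exact fun Y _ hY Z hZY _ => hY.bVan_of_ssubset hZY
  · exact fun X Z _ hZX hX => hX.mono hdown hZX
  · exact fun X h2 => bVan_iff_not_bPos_or_bPart h2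

/-- For every KC-PMI `P`:
(i) the subsystems (of size ≥ 2) with positive-or-partial β-set form an up-set under
inclusion, and below every such subsystem whose β-set is not completely essential
there is a proper subsystem with completely essential β-set;
(ii) the subsystems with completely essential β-sets form an antichain, and every
proper subsystem (of size ≥ 2) of such a subsystem has vanishing β-set;
(iii) the subsystems with vanishing β-sets form a down-set, complementary (within the
subsystems of size ≥ 2) to the set in (i). -/
theorem statement6 {N : ℕ} (hN : 2 ≤ N) (P : Set (MI N)) (hP : IsKCPMI P) :
    -- (i)
    ((∀ X X' : PSet N, 2 ≤ X.card → X ⊆ X' →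
        (BPos P X ∨ BPart P X) → (BPos P X' ∨ BPart P X')) ∧
     (∀ X : PSet N, 2 ≤ X.card → (BPos P X ∨ BPart P X) → ¬ BCEss P X →
        ∃ Z : PSet N, Z ⊂ X ∧ 2 ≤ Z.card ∧ BCEss P Z)) ∧
    -- (ii)
    ((∀ Y Y' : PSet N, 2 ≤ Y.card → 2 ≤ Y'.card →
        BCEss P Y → BCEss P Y' → Y ⊆ Y' → Y = Y') ∧
     (∀ Y : PSet N, 2 ≤ Y.card → BCEss P Y →
        ∀ Z : PSet N, Z ⊂ Y → 2 ≤ Z.card → BVan P Z)) ∧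
    -- (iii)
    ((∀ X Z : PSet N, 2 ≤ Z.card → Z ⊆ X → BVan P X → BVan P Z) ∧
     (∀ X : PSet N, 2 ≤ X.card → (BVan P X ↔ ¬ (BPos P X ∨ BPart P X)))) :=
  statement6_general P hP

end HEC
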